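/- arXiv:2408.11188 — 4 statements merged into one kernel-verified Lean document; each statement's English description precedes it below -/
import Mathlib

section
/- Let R be a commutative ring, A a commutative R-algebra, I an ideal of A, and Ω an A-submodule of the module of Kähler differentials Ω¹_{A/R}. Assume I defines an algebraic leaf of the foliation given by Ω, i.e. the images of Ω and of the A-submodule generated by {df : f ∈ I} in Ω¹_{A/R}/I·Ω¹_{A/R} coincide. Then for every R-derivation v : A → A one has v(I) ⊆ I if and only if v̂(ω) ∈ I for every ω ∈ Ω, where v̂ : Ω¹_{A/R} → A is the A-linear map corresponding to v. -/
/-- Proposition 17 (algebraic leaf case): for an algebraic leaf given by an ideal `I`,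
an `R`-derivation `v` of `A` satisfies `v I ⊆ I` iff `v̂ Ω ⊆ I`. -/
theorem stmt_0 (R A : Type*) [CommRing R] [CommRing A] [Algebra R A]
    (I : Ideal A) (Ω : Submodule A (KaehlerDifferential R A))
    (hleaf :
      Submodule.map (I • (⊤ : Submodule A (KaehlerDifferential R A))).mkQ Ω =
      Submodule.map (I • (⊤ : Submodule A (KaehlerDifferential R A))).mkQ
        (Submodule.span A ((KaehlerDifferential.D R A) '' (I : Set A)))) :
    ∀ v : Derivation R A A,
      (∀ f ∈ I, v f ∈ I) ↔ (∀ ω ∈ Ω, v.liftKaehlerDifferential ω ∈ I) := by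
  intro v
  set N := (I • (⊤ : Submodule A (KaehlerDifferential R A))) with hNdef
  have hN : ∀ τ ∈ N, v.liftKaehlerDifferential τ ∈ I := by
    intro τ hτ
    refine Submodule.smul_induction_on hτ ?_ ?_
    · intro a ha m _
      rw [map_smul, smul_eq_mul]
      exact I.mul_mem_right _ ha
    · intro x y hx hy; rw [map_add]; exact I.add_mem hx hy
  have hker : ∀ x : KaehlerDifferential R A, N.mkQ x = 0 → x ∈ N := by
    intro x hx
    rwa [← Submodule.ker_mkQ N, LinearMap.mem_ker]
  constructor
  · intro hv ω hω
    have hmem : N.mkQ ω ∈ Submodule.map N.mkQ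
        (Submodule.span A ((KaehlerDifferential.D R A) '' (I : Set A))) := by
      rw [← hleaf]; exact Submodule.mem_map_of_mem hω
    obtain ⟨σ, hσ, hq⟩ := hmem
    have hdiff : ω - σ ∈ N := (Submodule.Quotient.eq N).mp hq.symm
    have hσI : v.liftKaehlerDifferential σ ∈ I := by
      refine Submodule.span_induction ?_ ?_ ?_ ?_ hσ
      · rintro x ⟨f, hf, rfl⟩
        rw [Derivation.liftKaehlerDifferential_comp_D]
        exact hv f hf
      · simp
      · intro x y _ _ hx hy
        rw [map_add]; exact I.add_mem hx hy
      · intro a x _ hx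
        rw [map_smul, smul_eq_mul]; exact I.mul_mem_left _ hx
    have := I.add_mem (hN _ hdiff) hσI
    rwa [← map_add, sub_add_cancel] at this
  · intro hv f hf
    have hmem : N.mkQ (KaehlerDifferential.D R A f) ∈ Submodule.map N.mkQ Ω := by
      rw [hleaf]
      exact Submodule.mem_map_of_mem (Submodule.subset_span ⟨f, hf, rfl⟩)
    obtain ⟨ω, hω, hq⟩ := hmem
    have hdiff : KaehlerDifferential.D R A f - ω ∈ N :=
      (Submodule.Quotient.eq N).mp hq.symm
    have := I.add_mem (hN _ hdiff) (hv ω hω)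
    rw [← map_add, sub_add_cancel, Derivation.liftKaehlerDifferential_comp_D] at this
    exact this
end

section
/- Let R be a commutative ring, A a commutative R-algebra, and Ω an A-submodule of Ω¹_{A/R}. Suppose there exist an R-derivation v₀ : A → A and ω₀ ∈ Ω such that v̂₀(ω₀) is not a zero divisor in A. Then for every ideal J of A the following are equivalent: (1) J = 0; (2) {v ∈ Der_R(A) : v̂(Ω) ⊆ J} = {v ∈ Der_R(A) : v̂(Ω) = 0}. -/
lemma lift_smul {R A : Type*} [CommRing R] [CommRing A] [Algebra R A]
    (a : A) (v : Derivation R A A) :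
    (a • v).liftKaehlerDifferential = a • v.liftKaehlerDifferential := by
  apply Derivation.liftKaehlerDifferential_unique
  ext x
  simp

/-- Proposition 18: if some value `v̂₀ ω₀` (`v₀` a derivation, `ω₀ ∈ Ω`) is a
nonzerodivisor, then for an ideal `J`, `J = 0` iff
`{v : v̂ Ω ⊆ J} = {v : v̂ Ω = 0}`. -/
theorem stmt_1 (R A : Type*) [CommRing R] [CommRing A] [Algebra R A]
    (Ω : Submodule A (KaehlerDifferential R A))
    (hreg : ∃ v₀ : Derivation R A A, ∃ ω₀ ∈ Ω,
      v₀.liftKaehlerDifferential ω₀ ∈ nonZeroDivisors A) :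
    ∀ J : Ideal A,
      (J = ⊥ ↔
        {v : Derivation R A A | ∀ ω ∈ Ω, v.liftKaehlerDifferential ω ∈ J} =
        {v : Derivation R A A | ∀ ω ∈ Ω, v.liftKaehlerDifferential ω = 0}) := by
  intro J
  constructor
  · rintro rfl
    ext v
    simp [Ideal.mem_bot]
  · intro h
    obtain ⟨v₀, ω₀, hω₀, hnz⟩ := hreg
    rw [eq_bot_iff]; intro a ha; rw [Ideal.mem_bot]; revert a ha
    intro a ha
    have hmem : (a • v₀) ∈ {v : Derivation R A A | ∀ ω ∈ Ω,
        v.liftKaehlerDifferential ω ∈ J} := by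
      intro ω hω
      rw [lift_smul]
      exact J.mul_mem_right _ ha
    rw [h] at hmem
    have := hmem ω₀ hω₀
    rw [lift_smul] at this
    exact hnz.2 a this
end

section
/- Let R be a commutative ring, A a commutative R-algebra, I an ideal of A, and Ω an A-submodule of Ω¹_{A/R} such that I defines an algebraic leaf of the foliation given by Ω, i.e. the images of Ω and of the A-submodule generated by {df : f ∈ I} in Ω¹_{A/R}/I·Ω¹_{A/R} coincide. Let t : A → R be an R-algebra homomorphism with I ⊆ m := ker(t). Then a functional v ∈ Hom_R(m/m², R) vanishes on the image of I in m/m² if and only if ⟨ω, v⟩ = 0 for every ω ∈ Ω, where ⟨·,·⟩ is the canonical pairing determined by ⟨f·dg, v⟩ = t(f) · v(class of (g − algebraMap(t(g))) in m/m²). -/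
/-- Proposition 19 (second part, algebraic leaf case): for an algebraic leaf given by an
ideal `I` of the foliation `F(Ω)` passing through the `R`-point `t` (i.e. `I ⊆ m = ker t`),
a tangent vector `v ∈ Hom_R(m/m², R)` vanishes on the image of `I` iff `⟨ω, v⟩ = 0` for all
`ω ∈ Ω`, where `⟨·,·⟩` is the canonical pairing with `⟨f·dg, v⟩ = t(f) · v([g - t(g)])`. -/
theorem stmt_3 (R A : Type*) [CommRing R] [CommRing A] [Algebra R A]
    (I : Ideal A) (Ω : Submodule A (KaehlerDifferential R A))
    (hleaf :
      Submodule.map (I • (⊤ : Submodule A (KaehlerDifferential R A))).mkQ Ω =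
      Submodule.map (I • (⊤ : Submodule A (KaehlerDifferential R A))).mkQ
        (Submodule.span A ((KaehlerDifferential.D R A) '' (I : Set A))))
    (t : A →ₐ[R] R) (hIt : I ≤ RingHom.ker t)
    (Φ : KaehlerDifferential R A →ₗ[R]
        ((RingHom.ker t).Cotangent →ₗ[R] R) →ₗ[R] R)
    (hΦ : ∀ (f g : A) (v : (RingHom.ker t).Cotangent →ₗ[R] R),
      Φ (f • KaehlerDifferential.D R A g) v =
        t f * v ((RingHom.ker t).toCotangent
          ⟨g - algebraMap R A (t g), by simp [RingHom.mem_ker]⟩)) :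
    ∀ v : (RingHom.ker t).Cotangent →ₗ[R] R,
      (∀ f (hf : f ∈ I), v ((RingHom.ker t).toCotangent ⟨f, hIt hf⟩) = 0) ↔
      (∀ ω ∈ Ω, Φ ω v = 0) := by
  intro v
  -- L ω := Φ ω v
  set L : KaehlerDifferential R A →ₗ[R] R := Φ.flip v with hLdef
  have hLapp : ∀ ω, L ω = Φ ω v := fun ω => rfl
  -- Step 1: L kills f • m for f ∈ I
  have hgen : ∀ (m : KaehlerDifferential R A), ∀ f ∈ I, L (f • m) = 0 := by
    intro m
    have hm : m ∈ Submodule.span A (Set.range (KaehlerDifferential.D R A)) := by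
      rw [KaehlerDifferential.span_range_derivation]; trivial
    induction hm using Submodule.span_induction with
    | mem x hx =>
      obtain ⟨g, rfl⟩ := hx
      intro f hf
      have htf : t f = 0 := hIt hf
      rw [hLapp, hΦ f g v, htf, zero_mul]
    | zero => intro f hf; simp
    | add x y hx hy ihx ihy =>
      intro f hf
      rw [smul_add, map_add, ihx f hf, ihy f hf, add_zero]
    | smul a x hx ih =>
      intro f hf
      rw [smul_smul]
      exact ih (f * a) (I.mul_mem_right a hf)
  have hIsmul : ∀ x ∈ I • (⊤ : Submodule A (KaehlerDifferential R A)), L x = 0 := by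
    intro x hx
    refine Submodule.smul_induction_on hx (fun f hf m _ => hgen m f hf) ?_
    intro x y hx' hy'
    rw [map_add, hx', hy', add_zero]
  -- Step 2: L (D f) = v ([f]) for f ∈ I
  have hDf : ∀ f (hf : f ∈ I), L (KaehlerDifferential.D R A f) =
      v ((RingHom.ker t).toCotangent ⟨f, hIt hf⟩) := by
    intro f hf
    have htf : t f = 0 := hIt hf
    have h1 : (KaehlerDifferential.D R A) f
        = (1 : A) • (KaehlerDifferential.D R A) f := (one_smul _ _).symm
    rw [hLapp, h1, hΦ 1 f v, map_one, one_mul]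
    congr 1
    exact congrArg _ (Subtype.ext (by simp [htf]))
  -- helper: from mkQ-equality, difference is in I • ⊤
  have hdiff : ∀ x y : KaehlerDifferential R A,
      (I • (⊤ : Submodule A (KaehlerDifferential R A))).mkQ x =
      (I • (⊤ : Submodule A (KaehlerDifferential R A))).mkQ y →
      L x = L y := by
    intro x y h
    have : x - y ∈ I • (⊤ : Submodule A (KaehlerDifferential R A)) := by
      rwa [Submodule.mkQ_apply, Submodule.mkQ_apply, Submodule.Quotient.eq] at h
    have h0 := hIsmul _ this
    rw [map_sub] at h0
    exact sub_eq_zero.mp h0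
  constructor
  · -- v kills I ⟹ Φ ω v = 0 for ω ∈ Ω
    intro hv ω hω
    -- L kills span A (D '' I), even after an A-scalar
    have hspan : ∀ x ∈ Submodule.span A ((KaehlerDifferential.D R A) '' (I : Set A)),
        ∀ a : A, L (a • x) = 0 := by
      intro x hx
      induction hx using Submodule.span_induction with
      | mem y hy =>
        obtain ⟨f, hf, rfl⟩ := hy
        intro a
        have htf : t f = 0 := hIt hf
        rw [hLapp, hΦ a f v]
        have : ((RingHom.ker t).toCotangent
            ⟨f - algebraMap R A (t f), by simp [RingHom.mem_ker]⟩) =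
            (RingHom.ker t).toCotangent ⟨f, hIt hf⟩ :=
          congrArg _ (Subtype.ext (by simp [htf]))
        rw [this, hv f hf, mul_zero]
      | zero => intro a; simp
      | add x y hx' hy' ihx ihy =>
        intro a
        rw [smul_add, map_add, ihx a, ihy a, add_zero]
      | smul b x hx' ih =>
        intro a
        rw [smul_smul]
        exact ih (a * b)
    -- ω ∈ Ω: find x in span with same image
    have : (I • (⊤ : Submodule A (KaehlerDifferential R A))).mkQ ω ∈
        Submodule.map (I • (⊤ : Submodule A (KaehlerDifferential R A))).mkQ
          (Submodule.span A ((KaehlerDifferential.D R A) '' (I : Set A))) := by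
      rw [← hleaf]
      exact ⟨ω, hω, rfl⟩
    obtain ⟨x, hx, hxe⟩ := this
    rw [← hLapp]
    calc L ω = L x := hdiff ω x hxe.symm
    _ = 0 := by have := hspan x hx 1; rwa [one_smul] at this
  · -- Φ ω v = 0 for ω ∈ Ω ⟹ v kills I
    intro hΩ f hf
    rw [← hDf f hf]
    have : (I • (⊤ : Submodule A (KaehlerDifferential R A))).mkQ
        (KaehlerDifferential.D R A f) ∈
        Submodule.map (I • (⊤ : Submodule A (KaehlerDifferential R A))).mkQ Ω := by
      rw [hleaf]
      exact ⟨KaehlerDifferential.D R A f,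
        Submodule.subset_span ⟨f, hf, rfl⟩, rfl⟩
    obtain ⟨ω, hω, hωe⟩ := this
    calc L (KaehlerDifferential.D R A f) = L ω := hdiff _ ω hωe.symm
    _ = 0 := by rw [hLapp]; exact hΩ ω hω
end

section
/- Let U ⊆ ℝⁿ be open and let Y : U → Matrix (Fin h) (Fin h) ℝ be twice continuously differentiable on U with Y(z) invertible for every z ∈ U. For 1 ≤ i ≤ n define B_i : U → Matrix (Fin h) (Fin h) ℝ by B_i(z) := (∂_i Y)(z) · Y(z)⁻¹, where ∂_i denotes the partial derivative in the i-th coordinate direction. Then for all z ∈ U and all indices i, j: (∂_i B_j)(z) − (∂_j B_i)(z) = B_i(z)·B_j(z) − B_j(z)·B_i(z). -/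
attribute [local instance] Matrix.normedAddCommGroup Matrix.normedSpace

namespace Stmt7Aux

variable {n h : ℕ}

local notation "M" => Matrix (Fin h) (Fin h) ℝ
local notation "E" => (Fin n → ℝ)

/-- Matrix multiplication as a continuous bilinear map. -/
noncomputable def mulB (h : ℕ) :
    Matrix (Fin h) (Fin h) ℝ →L[ℝ] Matrix (Fin h) (Fin h) ℝ →L[ℝ] Matrix (Fin h) (Fin h) ℝ :=
  LinearMap.toContinuousLinearMap
  { toFun := fun A => LinearMap.toContinuousLinearMap (LinearMap.mulLeft ℝ A)
    map_add' := fun A B => by ext C; simp [add_mul]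
    map_smul' := fun c A => by ext C; simp [smul_mul_assoc] }

@[simp] lemma mulB_apply (A C : M) : mulB h A C = A * C := rfl

/-- Product rule for matrix-valued functions. -/
lemma fderiv_matmul {u v : E → M} {z : E}
    (hu : DifferentiableAt ℝ u z) (hv : DifferentiableAt ℝ v z) (e : E) :
    fderiv ℝ (fun w => u w * v w) z e
      = fderiv ℝ u z e * v z + u z * fderiv ℝ v z e := by
  have H := (mulB h).hasFDerivAt_of_bilinear hu.hasFDerivAt hv.hasFDerivAt
  rw [show fderiv ℝ (fun w => u w * v w) z = _ from H.fderiv]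
  exact add_comm _ _

/-- The linear equivalence from matrices to continuous linear endomorphisms. -/
noncomputable def ψ (h : ℕ) :
    Matrix (Fin h) (Fin h) ℝ ≃ₗ[ℝ] ((Fin h → ℝ) →L[ℝ] (Fin h → ℝ)) :=
  Matrix.toLin'.trans LinearMap.toContinuousLinearMap

lemma ψ_apply (A : M) (x : Fin h → ℝ) : ψ h A x = A.mulVec x := rfl

lemma ψ_mul (A B : M) : ψ h (A * B) = ψ h A * ψ h B := by
  ext x
  simp [ψ_apply, ContinuousLinearMap.mul_apply, Matrix.mulVec_mulVec]

lemma ψ_one : ψ h (1 : M) = 1 := by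
  ext x
  simp [ψ_apply, Matrix.one_mulVec]

lemma isUnit_ψ {A : M} (hA : IsUnit A) : IsUnit (ψ h A) := by
  have hd : IsUnit A.det := A.isUnit_iff_isUnit_det.mp hA
  exact ⟨⟨ψ h A, ψ h A⁻¹,
    by rw [← ψ_mul, Matrix.mul_nonsing_inv _ hd, ψ_one],
    by rw [← ψ_mul, Matrix.nonsing_inv_mul _ hd, ψ_one]⟩, rfl⟩

lemma isUnit_of_ψ {A : M} (hA : IsUnit (ψ h A)) : IsUnit A := by
  obtain ⟨u, hu⟩ := hA
  refine ⟨⟨A, (ψ h).symm ↑u⁻¹, ?_, ?_⟩, rfl⟩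
  · apply (ψ h).injective
    rw [ψ_mul, LinearEquiv.apply_symm_apply, ψ_one, ← hu, Units.mul_inv]
  · apply (ψ h).injective
    rw [ψ_mul, LinearEquiv.apply_symm_apply, ψ_one, ← hu, Units.inv_mul]

lemma ψ_inv (A : M) : ψ h A⁻¹ = Ring.inverse (ψ h A) := by
  by_cases hA : IsUnit A
  · have hd : IsUnit A.det := A.isUnit_iff_isUnit_det.mp hA
    calc ψ h A⁻¹ = ψ h A⁻¹ * (ψ h A * Ring.inverse (ψ h A)) := by
          rw [Ring.mul_inverse_cancel _ (isUnit_ψ hA), mul_one]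
      _ = (ψ h A⁻¹ * ψ h A) * Ring.inverse (ψ h A) := (mul_assoc _ _ _).symm
      _ = Ring.inverse (ψ h A) := by
          rw [← ψ_mul, Matrix.nonsing_inv_mul _ hd, ψ_one, one_mul]
  · rw [Ring.inverse_non_unit _ (fun hu => hA (isUnit_of_ψ hu)),
      Matrix.nonsing_inv_apply_not_isUnit _ (mt A.isUnit_iff_isUnit_det.mpr hA),
      map_zero]

/-- `ψ` as a continuous linear map. -/
noncomputable def ψc (h : ℕ) :
    Matrix (Fin h) (Fin h) ℝ →L[ℝ] ((Fin h → ℝ) →L[ℝ] (Fin h → ℝ)) :=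
  LinearMap.toContinuousLinearMap (ψ h).toLinearMap

/-- `ψ.symm` as a continuous linear map. -/
noncomputable def ψc' (h : ℕ) :
    ((Fin h → ℝ) →L[ℝ] (Fin h → ℝ)) →L[ℝ] Matrix (Fin h) (Fin h) ℝ :=
  LinearMap.toContinuousLinearMap (ψ h).symm.toLinearMap

lemma ψc_apply (A : M) : ψc h A = ψ h A := rfl

lemma ψc'_apply (x : (Fin h → ℝ) →L[ℝ] (Fin h → ℝ)) : ψc' h x = (ψ h).symm x := rfl

/-- Differentiability of the matrix inverse. -/
lemma differentiableAt_matinv {Y : E → M} {z : E}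
    (hY : DifferentiableAt ℝ Y z) (hz : IsUnit (Y z)) :
    DifferentiableAt ℝ (fun w => (Y w)⁻¹) z := by
  have heq : (fun w => (Y w)⁻¹)
      = fun w => ψc' h (Ring.inverse (ψc h (Y w))) := by
    funext w
    rw [ψc'_apply, ψc_apply, ← ψ_inv, LinearEquiv.symm_apply_apply]
  rw [heq]
  have h1 : DifferentiableAt ℝ (fun w => ψc h (Y w)) z :=
    (ψc h).differentiableAt.comp z hY
  have h2 : DifferentiableAt ℝ (fun w => Ring.inverse (ψc h (Y w))) z := by
    have hu : IsUnit (ψc h (Y z)) := isUnit_ψ hz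
    exact (differentiableAt_inverse hu).comp z h1
  exact (ψc' h).differentiableAt.comp z h2

/-- Derivative of the matrix inverse. -/
lemma fderiv_matinv {Y : E → M} {z : E} {U : Set E} (hU : IsOpen U) (hzU : z ∈ U)
    (hYd : ∀ w ∈ U, DifferentiableAt ℝ Y w)
    (hunit : ∀ w ∈ U, IsUnit (Y w)) (e : E) :
    fderiv ℝ (fun w => (Y w)⁻¹) z e
      = -((Y z)⁻¹ * fderiv ℝ Y z e * (Y z)⁻¹) := by
  set W : E → M := fun w => (Y w)⁻¹ with hW
  have hWd : DifferentiableAt ℝ W z := differentiableAt_matinv (hYd z hzU) (hunit z hzU)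
  have heq : (fun w => Y w * W w) =ᶠ[nhds z] (fun _ => (1 : M)) := by
    filter_upwards [hU.mem_nhds hzU] with w hw
    exact Matrix.mul_nonsing_inv _ ((Y w).isUnit_iff_isUnit_det.mp (hunit w hw))
  have h0 : fderiv ℝ (fun w => Y w * W w) z = 0 := by
    rw [heq.fderiv_eq, fderiv_fun_const]
    rfl
  have hprod : fderiv ℝ (fun w => Y w * W w) z e
      = fderiv ℝ Y z e * W z + Y z * fderiv ℝ W z e :=
    fderiv_matmul (hYd z hzU) hWd e
  rw [h0] at hprod
  have hzero : (0 : M) = fderiv ℝ Y z e * W z + Y z * fderiv ℝ W z e := hprod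
  have hd : IsUnit (Y z).det := (Y z).isUnit_iff_isUnit_det.mp (hunit z hzU)
  have key : Y z * fderiv ℝ W z e = -(fderiv ℝ Y z e * W z) := by
    rw [eq_neg_iff_add_eq_zero, add_comm]
    exact hzero.symm
  calc fderiv ℝ W z e = ((Y z)⁻¹ * Y z) * fderiv ℝ W z e := by
        rw [Matrix.nonsing_inv_mul _ hd, one_mul]
    _ = (Y z)⁻¹ * (Y z * fderiv ℝ W z e) := by rw [mul_assoc]
    _ = (Y z)⁻¹ * (-(fderiv ℝ Y z e * W z)) := by rw [key]
    _ = -((Y z)⁻¹ * fderiv ℝ Y z e * (Y z)⁻¹) := by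
        rw [mul_neg, mul_assoc]

end Stmt7Aux

open Stmt7Aux in
/-- Theorem 21 (proved direction, in coordinates): if `Y` is a `C²` invertible matrix
solution on the open set `U` and `B_i = (∂_i Y)·Y⁻¹`, then
`∂_i B_j − ∂_j B_i = B_i B_j − B_j B_i` on `U`. -/
theorem stmt_7 (n h : ℕ) (U : Set (Fin n → ℝ)) (hU : IsOpen U)
    (Y : (Fin n → ℝ) → Matrix (Fin h) (Fin h) ℝ)
    (hY : ContDiffOn ℝ 2 Y U)
    (hinv : ∀ z ∈ U, IsUnit (Y z))
    (B : Fin n → (Fin n → ℝ) → Matrix (Fin h) (Fin h) ℝ)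
    (hB : ∀ i z, B i z = fderiv ℝ Y z (Pi.single i 1) * (Y z)⁻¹) :
    ∀ z ∈ U, ∀ i j : Fin n,
      fderiv ℝ (B j) z (Pi.single i 1) - fderiv ℝ (B i) z (Pi.single j 1) =
        B i z * B j z - B j z * B i z := by
  intro z hz i j
  have hYd : ∀ w ∈ U, DifferentiableAt ℝ Y w := fun w hw =>
    ((hY.differentiableOn two_ne_zero).differentiableAt (hU.mem_nhds hw))
  have hCA : ContDiffAt ℝ 2 Y z := hY.contDiffAt (hU.mem_nhds hz)
  have hFd : DifferentiableAt ℝ (fderiv ℝ Y) z :=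
    (hCA.fderiv_right (m := 1) (by norm_num)).differentiableAt one_ne_zero
  -- derivative of w ↦ ∂_k Y(w)
  have hFk : ∀ k : Fin n, DifferentiableAt ℝ (fun w => fderiv ℝ Y w (Pi.single k 1)) z :=
    fun k => hFd.clm_apply (differentiableAt_const _)
  have hFk' : ∀ k l : Fin n,
      fderiv ℝ (fun w => fderiv ℝ Y w (Pi.single k 1)) z (Pi.single l 1)
        = fderiv ℝ (fderiv ℝ Y) z (Pi.single l 1) (Pi.single k 1) := by
    intro k l
    rw [show fderiv ℝ (fun w => fderiv ℝ Y w (Pi.single k 1)) z = _ from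
      fderiv_clm_apply hFd (differentiableAt_const _)]
    simp only [fderiv_fun_const]
    show fderiv ℝ Y z 0 + fderiv ℝ (fderiv ℝ Y) z (Pi.single l 1) (Pi.single k 1) = _
    rw [map_zero, zero_add]
  have hWd : DifferentiableAt ℝ (fun w => (Y w)⁻¹) z :=
    differentiableAt_matinv (hYd z hz) (hinv z hz)
  have hW' : ∀ l : Fin n,
      fderiv ℝ (fun w => (Y w)⁻¹) z (Pi.single l 1)
        = -((Y z)⁻¹ * fderiv ℝ Y z (Pi.single l 1) * (Y z)⁻¹) :=
    fun l => fderiv_matinv hU hz hYd hinv _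
  -- the derivative of B k
  have hBk : ∀ k l : Fin n,
      fderiv ℝ (B k) z (Pi.single l 1)
        = fderiv ℝ (fderiv ℝ Y) z (Pi.single l 1) (Pi.single k 1) * (Y z)⁻¹
          + fderiv ℝ Y z (Pi.single k 1)
            * (-((Y z)⁻¹ * fderiv ℝ Y z (Pi.single l 1) * (Y z)⁻¹)) := by
    intro k l
    have hBfun : B k = fun w => fderiv ℝ Y w (Pi.single k 1) * (Y w)⁻¹ :=
      funext fun w => hB k w
    rw [hBfun, fderiv_matmul (hFk k) hWd, hFk' k l, hW' l]
  have hsymm : fderiv ℝ (fderiv ℝ Y) z (Pi.single i 1) (Pi.single j 1)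
      = fderiv ℝ (fderiv ℝ Y) z (Pi.single j 1) (Pi.single i 1) :=
    (hCA.isSymmSndFDerivAt (by simp [minSmoothness_of_isRCLikeNormedField])) _ _
  rw [hBk j i, hBk i j, hB i z, hB j z, hsymm]
  noncomm_ring
end
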